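/- arXiv:2210.16880 — 3 statements merged into one kernel-verified Lean document; each statement's English description precedes it below -/
import Mathlib

section
/- Let p ∈ (0,1), z ∈ ℝ, and let F, G ∈ F_1^+ be cumulative distribution functions. Then the difference functional Δ_{p,z}(F,G) = ∫_p^1 (F^{-1}(u) − G^{-1}(u)) du − ∫_z^∞ (G(x) − F(x)) dx satisfies the two-sided bound (F(z) − p)(F^{-1}(p) − z) ≤ Δ_{p,z}(F,G) ≤ (G(z) − p)(z − G^{-1}(p)). -/
open MeasureTheory ProbabilityTheory Filter Set
open scoped ENNReal
set_option linter.unusedSectionVars false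
set_option linter.unusedVariables false

/-- The cumulative distribution function of a probability measure `μ` on `ℝ`. -/
noncomputable def cdfOf (μ : Measure ℝ) : ℝ → ℝ := fun x => (μ (Iic x)).toReal

/-- The (left-continuous, generalized inverse) quantile function of a cdf `F`:
`F⁻¹(p) = inf {x : F x ≥ p}`. -/
noncomputable def qtl (F : ℝ → ℝ) (p : ℝ) : ℝ := sInf {x | p ≤ F x}

/-- The "difference" functional
`Δ_{p,z}(F,G) = ∫_p^1 (F⁻¹(u) − G⁻¹(u)) du − ∫_z^∞ (G(x) − F(x)) dx`. -/
noncomputable def deltaFun (p z : ℝ) (μ ν : Measure ℝ) : ℝ :=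
  (∫ u in p..1, (qtl (cdfOf μ) u - qtl (cdfOf ν) u)) -
    ∫ x in Ioi z, (cdfOf ν x - cdfOf μ x)

section Aux
variable (μ : Measure ℝ) [IsProbabilityMeasure μ]

lemma cdfOf_eq : cdfOf μ = ⇑(cdf μ) :=
  funext fun x => (cdf_eq_real μ x).symm

lemma meas_Ioi' (x : ℝ) : μ (Ioi x) = ENNReal.ofReal (1 - cdf μ x) := by
  have h1 : μ (Ioi x) = μ univ - μ (Iic x) := by
    rw [← Set.compl_Iic]
    exact measure_compl measurableSet_Iic (measure_ne_top μ _)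
  rw [h1, measure_univ, ← ofReal_cdf μ x, ← ENNReal.ofReal_one,
    ← ENNReal.ofReal_sub _ (cdf_nonneg μ x)]

lemma bddBelow_levelSet {u : ℝ} (hu : 0 < u) : BddBelow {x | u ≤ cdf μ x} := by
  obtain ⟨b, hb⟩ := eventually_atBot.mp ((tendsto_cdf_atBot μ).eventually_lt_const hu)
  exact ⟨b, fun a ha => le_of_not_gt fun h => (hb a h.le).not_ge ha⟩

lemma levelSet_nonempty {u : ℝ} (hu : u < 1) : {x | u ≤ cdf μ x}.Nonempty := by
  obtain ⟨x, hx⟩ := ((tendsto_cdf_atTop μ).eventually_const_lt hu).exists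
  exact ⟨x, hx.le⟩

lemma le_cdf_qtl {u : ℝ} (hu0 : 0 < u) (hu1 : u < 1) : u ≤ cdf μ (qtl (cdf μ) u) := by
  have hne := levelSet_nonempty μ hu1
  have key : ∀ y ∈ Ioi (qtl (cdf μ) u), u ≤ cdf μ y := by
    intro y hy
    obtain ⟨a, haS, hay⟩ := exists_lt_of_csInf_lt hne hy
    exact le_trans haS (monotone_cdf μ hay.le)
  exact ge_of_tendsto (((cdf μ).right_continuous _).mono Ioi_subset_Ici_self)
    (eventually_nhdsWithin_of_forall key)

lemma qtl_le_iff {u : ℝ} (hu0 : 0 < u) (hu1 : u < 1) (x : ℝ) :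
    qtl (cdf μ) u ≤ x ↔ u ≤ cdf μ x := by
  constructor
  · intro h; exact le_trans (le_cdf_qtl μ hu0 hu1) (monotone_cdf μ h)
  · intro h; exact csInf_le (bddBelow_levelSet μ hu0) h

lemma qtl_monoOn : MonotoneOn (qtl (cdf μ)) (Ioo (0:ℝ) 1) := fun u hu v hv huv =>
  csInf_le_csInf (bddBelow_levelSet μ hu.1) (levelSet_nonempty μ hv.2)
    (fun x hx => le_trans huv hx)


lemma shift_lintegral (z : ℝ) (g : ℝ → ℝ≥0∞) :
    ∫⁻ t in Ioi (0:ℝ), g (z + t) = ∫⁻ x in Ioi z, g x := by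
  have h := (measurePreserving_add_left volume z).setLIntegral_comp_preimage_emb
    (measurableEmbedding_addLeft z) g (Ioi z)
  have he : (fun t => z + t) ⁻¹' (Ioi z) = Ioi (0:ℝ) := by ext t; simp
  rwa [he] at h

lemma lint_max_sub (z : ℝ) :
    ∫⁻ y, ENNReal.ofReal (max (y - z) 0) ∂μ = ∫⁻ t in Ioi (0:ℝ), μ (Ioi (z + t)) := by
  rw [lintegral_eq_lintegral_meas_lt μ (f := fun y => max (y - z) 0)
    (Eventually.of_forall fun y => le_max_right _ _)
    (((measurable_id.sub_const z).max measurable_const).aemeasurable)]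
  refine setLIntegral_congr_fun measurableSet_Ioi (fun t ht => ?_)
  congr 1
  ext a
  simp only [mem_setOf_eq, mem_Ioi, lt_max_iff]
  constructor
  · rintro (h | h)
    · linarith
    · exact absurd ht (by simpa using h.le)
  · intro h; left; linarith

lemma lint_tail_fin (z : ℝ) (hμ : Integrable (fun x => max x 0) μ) :
    ∫⁻ t in Ioi (0:ℝ), μ (Ioi (z + t)) < ⊤ := by
  rw [← lint_max_sub μ z]
  have hint : Integrable (fun y => max y 0 + |z|) μ :=
    hμ.add (integrable_const _)
  refine lt_of_le_of_lt (lintegral_mono fun y => ENNReal.ofReal_le_ofReal ?_)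
    hint.lintegral_lt_top
  have h1 : -z ≤ |z| := neg_le_abs z
  have h2 : (0:ℝ) ≤ max y 0 := le_max_right _ _
  have h3 : y ≤ max y 0 := le_max_left _ _
  apply max_le <;> [skip; positivity]
  linarith

lemma lint_qtl (z : ℝ) :
    ∫⁻ u in Ioo (0:ℝ) 1, ENNReal.ofReal (max (qtl (cdf μ) u - z) 0)
      = ∫⁻ t in Ioi (0:ℝ), μ (Ioi (z + t)) := by
  have hQm : AEMeasurable (qtl (cdf μ)) (volume.restrict (Ioo (0:ℝ) 1)) :=
    aemeasurable_restrict_of_monotoneOn measurableSet_Ioo (qtl_monoOn μ)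
  rw [lintegral_eq_lintegral_meas_lt _ (f := fun u => max (qtl (cdf μ) u - z) 0)
    (Eventually.of_forall fun y => le_max_right _ _)
    (((hQm.sub_const z).max aemeasurable_const))]
  refine setLIntegral_congr_fun measurableSet_Ioi (fun t ht => ?_)
  rw [Measure.restrict_apply' measurableSet_Ioo]
  have hset : {u : ℝ | t < max (qtl (cdf μ) u - z) 0} ∩ Ioo 0 1 = Ioo (cdf μ (z + t)) 1 := by
    ext u
    simp only [mem_inter_iff, mem_setOf_eq, mem_Ioo, lt_max_iff]
    constructor
    · rintro ⟨h | h, hu0, hu1⟩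
      · refine ⟨?_, hu1⟩
        by_contra hc
        push_neg at hc
        have := (qtl_le_iff μ hu0 hu1 (z + t)).mpr hc
        linarith
      · exact absurd ht (by simpa using h.le)
    · rintro ⟨hcu, hu1⟩
      have hu0 : 0 < u := lt_of_le_of_lt (cdf_nonneg μ (z + t)) hcu
      refine ⟨Or.inl ?_, hu0, hu1⟩
      have : ¬ qtl (cdf μ) u ≤ z + t := by
        rw [qtl_le_iff μ hu0 hu1]; exact not_le.mpr hcu
      push_neg at this
      linarith
  rw [hset, Real.volume_Ioo, meas_Ioi']

lemma tail_integrable (z : ℝ) (hμint : Integrable (fun x => max x 0) μ) :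
    IntegrableOn (fun x => 1 - cdf μ x) (Ioi z) volume := by
  have hm : AEStronglyMeasurable (fun x => 1 - cdf μ x) (volume.restrict (Ioi z)) :=
    (measurable_const.sub (monotone_cdf μ).measurable).aestronglyMeasurable
  have hnn : 0 ≤ᵐ[volume.restrict (Ioi z)] fun x => 1 - cdf μ x :=
    Eventually.of_forall fun x => sub_nonneg.mpr (cdf_le_one μ x)
  have hl : ∫⁻ x in Ioi z, ENNReal.ofReal (1 - cdf μ x) = ∫⁻ t in Ioi (0:ℝ), μ (Ioi (z + t)) := by
    rw [← shift_lintegral z (fun x => ENNReal.ofReal (1 - cdf μ x))]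
    exact setLIntegral_congr_fun measurableSet_Ioi
      (fun t ht => by rw [meas_Ioi'])
  exact ⟨hm, (hasFiniteIntegral_iff_ofReal hnn).mpr (by rw [hl]; exact lint_tail_fin μ z hμint)⟩

lemma tail_integral_eq (z : ℝ) :
    ∫ x in Ioi z, (1 - cdf μ x) = (∫⁻ t in Ioi (0:ℝ), μ (Ioi (z + t))).toReal := by
  have hm : AEStronglyMeasurable (fun x => 1 - cdf μ x) (volume.restrict (Ioi z)) :=
    (measurable_const.sub (monotone_cdf μ).measurable).aestronglyMeasurable
  have hnn : 0 ≤ᵐ[volume.restrict (Ioi z)] fun x => 1 - cdf μ x :=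
    Eventually.of_forall fun x => sub_nonneg.mpr (cdf_le_one μ x)
  have hl : ∫⁻ x in Ioi z, ENNReal.ofReal (1 - cdf μ x) = ∫⁻ t in Ioi (0:ℝ), μ (Ioi (z + t)) := by
    rw [← shift_lintegral z (fun x => ENNReal.ofReal (1 - cdf μ x))]
    exact setLIntegral_congr_fun measurableSet_Ioi
      (fun t ht => by rw [meas_Ioi'])
  rw [integral_eq_lintegral_of_nonneg_ae hnn hm, hl]

lemma qmax_integrable (z : ℝ) (hμint : Integrable (fun x => max x 0) μ) :
    IntegrableOn (fun u => max (qtl (cdf μ) u - z) 0) (Ioo (0:ℝ) 1) volume := by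
  have hQm : AEMeasurable (qtl (cdf μ)) (volume.restrict (Ioo (0:ℝ) 1)) :=
    aemeasurable_restrict_of_monotoneOn measurableSet_Ioo (qtl_monoOn μ)
  have hm : AEStronglyMeasurable (fun u => max (qtl (cdf μ) u - z) 0)
      (volume.restrict (Ioo (0:ℝ) 1)) :=
    ((hQm.sub_const z).max aemeasurable_const).aestronglyMeasurable
  have hnn : 0 ≤ᵐ[volume.restrict (Ioo (0:ℝ) 1)] fun u => max (qtl (cdf μ) u - z) 0 :=
    Eventually.of_forall fun u => le_max_right _ _
  exact ⟨hm, (hasFiniteIntegral_iff_ofReal hnn).mpr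
    (by rw [lint_qtl μ z]; exact lint_tail_fin μ z hμint)⟩

lemma qmax_integral_eq (z : ℝ) :
    ∫ u in Ioo (0:ℝ) 1, max (qtl (cdf μ) u - z) 0
      = (∫⁻ t in Ioi (0:ℝ), μ (Ioi (z + t))).toReal := by
  have hQm : AEMeasurable (qtl (cdf μ)) (volume.restrict (Ioo (0:ℝ) 1)) :=
    aemeasurable_restrict_of_monotoneOn measurableSet_Ioo (qtl_monoOn μ)
  have hm : AEStronglyMeasurable (fun u => max (qtl (cdf μ) u - z) 0)
      (volume.restrict (Ioo (0:ℝ) 1)) :=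
    ((hQm.sub_const z).max aemeasurable_const).aestronglyMeasurable
  have hnn : 0 ≤ᵐ[volume.restrict (Ioo (0:ℝ) 1)] fun u => max (qtl (cdf μ) u - z) 0 :=
    Eventually.of_forall fun u => le_max_right _ _
  rw [integral_eq_lintegral_of_nonneg_ae hnn hm, lint_qtl μ z]

lemma tail_eq_qmax (z : ℝ) :
    ∫ x in Ioi z, (1 - cdf μ x) = ∫ u in Ioo (0:ℝ) 1, max (qtl (cdf μ) u - z) 0 := by
  rw [tail_integral_eq μ z, qmax_integral_eq μ z]

lemma qtl_integrableOn {p : ℝ} (z : ℝ) (hμint : Integrable (fun x => max x 0) μ)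
    (hp : p ∈ Ioo (0:ℝ) 1) :
    IntegrableOn (qtl (cdf μ)) (Ioo p 1) volume := by
  have hQm : AEStronglyMeasurable (qtl (cdf μ)) (volume.restrict (Ioo p 1)) :=
    (aemeasurable_restrict_of_monotoneOn measurableSet_Ioo
      ((qtl_monoOn μ).mono (Ioo_subset_Ioo hp.1.le le_rfl))).aestronglyMeasurable
  have hg : IntegrableOn
      (fun u => (|qtl (cdf μ) p| + |z|) + max (qtl (cdf μ) u - z) 0) (Ioo p 1) volume := by
    refine Integrable.add (integrableOn_const measure_Ioo_lt_top.ne) ?_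
    exact (qmax_integrable μ z hμint).mono_set (Ioo_subset_Ioo hp.1.le le_rfl)
  refine Integrable.mono' hg hQm (Filter.eventually_iff_exists_mem.mpr
    ⟨Ioo p 1, self_mem_ae_restrict measurableSet_Ioo, fun u hu => ?_⟩)
  have h1 : qtl (cdf μ) p ≤ qtl (cdf μ) u :=
    qtl_monoOn μ hp ⟨hp.1.trans hu.1, hu.2⟩ hu.1.le
  have h2 : (0:ℝ) ≤ max (qtl (cdf μ) u - z) 0 := le_max_right _ _
  have h3 : qtl (cdf μ) u - z ≤ max (qtl (cdf μ) u - z) 0 := le_max_left _ _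
  have h4 : -|qtl (cdf μ) p| ≤ qtl (cdf μ) p := neg_abs_le _
  have h5 : z ≤ |z| := le_abs_self z
  rw [Real.norm_eq_abs, abs_le]
  constructor <;> [linarith [abs_nonneg z]; linarith [abs_nonneg (qtl (cdf μ) p)]]

lemma psi_bounds {p : ℝ} (z : ℝ) (hμint : Integrable (fun x => max x 0) μ)
    (hp : p ∈ Ioo (0:ℝ) 1) :
    z * (1 - p) - (cdf μ z - p) * (z - qtl (cdf μ) p) ≤
        (∫ u in Ioo p 1, qtl (cdf μ) u) - ∫ u in Ioo (0:ℝ) 1, max (qtl (cdf μ) u - z) 0 ∧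
      (∫ u in Ioo p 1, qtl (cdf μ) u) - ∫ u in Ioo (0:ℝ) 1, max (qtl (cdf μ) u - z) 0
        ≤ z * (1 - p) := by
  have hmono := qtl_monoOn μ
  set Q := qtl (cdf μ) with hQdef
  set c := cdf μ z with hcdef
  set q := Q p with hqdef
  have hc1 : c ≤ 1 := cdf_le_one μ z
  have hc0 : 0 ≤ c := cdf_nonneg μ z
  -- integrability facts
  have hIQ : IntegrableOn Q (Ioo p 1) volume := qtl_integrableOn μ z hμint hp
  have hImax01 : IntegrableOn (fun u => max (Q u - z) 0) (Ioo (0:ℝ) 1) volume :=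
    qmax_integrable μ z hμint
  have hImax_p1 : IntegrableOn (fun u => max (Q u - z) 0) (Ioo p 1) volume :=
    hImax01.mono_set (Ioo_subset_Ioo hp.1.le le_rfl)
  have hImax_0p : IntegrableOn (fun u => max (Q u - z) 0) (Ioo (0:ℝ) p) volume :=
    hImax01.mono_set (Ioo_subset_Ioo le_rfl hp.2.le)
  have hImax_Ico : IntegrableOn (fun u => max (Q u - z) 0) (Ico p 1) volume :=
    hImax01.mono_set (fun u hu => ⟨hp.1.trans_le hu.1, hu.2⟩)
  have hQm1 : AEMeasurable Q (volume.restrict (Ioo p 1)) :=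
    aemeasurable_restrict_of_monotoneOn measurableSet_Ioo
      (hmono.mono (Ioo_subset_Ioo hp.1.le le_rfl))
  have hIzmax : IntegrableOn (fun u => max (z - Q u) 0) (Ioo p 1) volume := by
    refine Integrable.mono' (g := fun _ => max (z - q) 0)
      (integrableOn_const measure_Ioo_lt_top.ne)
      ((aemeasurable_const.sub hQm1).max aemeasurable_const).aestronglyMeasurable
      (Filter.eventually_iff_exists_mem.mpr
        ⟨Ioo p 1, self_mem_ae_restrict measurableSet_Ioo, fun u hu => ?_⟩)
    have h1 : q ≤ Q u := hmono hp ⟨hp.1.trans hu.1, hu.2⟩ hu.1.le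
    rw [Real.norm_eq_abs, abs_of_nonneg (le_max_right _ _)]
    exact max_le (le_trans (by linarith) (le_max_left _ _)) (le_max_right _ _)
  -- split
  have hsplit : ∫ u in Ioo (0:ℝ) 1, max (Q u - z) 0
      = (∫ u in Ioo (0:ℝ) p, max (Q u - z) 0) + ∫ u in Ioo p 1, max (Q u - z) 0 := by
    rw [← Set.Ioo_union_Ico_eq_Ioo hp.1 hp.2.le,
      setIntegral_union (Set.disjoint_left.mpr fun u hu hu' => absurd hu.2 (not_lt.mpr hu'.1))
        measurableSet_Ico hImax_0p hImax_Ico,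
      integral_Ico_eq_integral_Ioo]
  set I1 := ∫ u in Ioo p 1, max (z - Q u) 0 with hI1def
  set I2 := ∫ u in Ioo (0:ℝ) p, max (Q u - z) 0 with hI2def
  have hkey : (∫ u in Ioo p 1, Q u) - ∫ u in Ioo (0:ℝ) 1, max (Q u - z) 0
      = z * (1 - p) - I1 - I2 := by
    rw [hsplit]
    have h1 : (∫ u in Ioo p 1, Q u) - ∫ u in Ioo p 1, max (Q u - z) 0
        = ∫ u in Ioo p 1, (Q u - max (Q u - z) 0) := (integral_sub hIQ hImax_p1).symm
    have h2 : ∫ u in Ioo p 1, (Q u - max (Q u - z) 0)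
        = ∫ u in Ioo p 1, (z - max (z - Q u) 0) := by
      refine setIntegral_congr_fun measurableSet_Ioo fun u hu => ?_
      rcases le_total (Q u) z with h | h
      · rw [max_eq_right (by linarith), max_eq_left (by linarith)]; ring
      · rw [max_eq_left (by linarith), max_eq_right (by linarith)]; ring
    have h3 : ∫ u in Ioo p 1, (z - max (z - Q u) 0) = z * (1 - p) - I1 := by
      rw [integral_sub (integrableOn_const (C := z) measure_Ioo_lt_top.ne) hIzmax]
      congr 1
      rw [setIntegral_const, measureReal_def, Real.volume_Ioo, ENNReal.toReal_ofReal (by linarith [hp.2]),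
        smul_eq_mul, mul_comm]
    linarith
  have hI1nn : 0 ≤ I1 := setIntegral_nonneg measurableSet_Ioo fun u hu => le_max_right _ _
  have hI2nn : 0 ≤ I2 := setIntegral_nonneg measurableSet_Ioo fun u hu => le_max_right _ _
  have hmain : I1 + I2 ≤ (c - p) * (z - q) := by
    rcases le_or_gt q z with hqz | hqz
    · -- q ≤ z, so p ≤ c
      have hpc : p ≤ c := (qtl_le_iff μ hp.1 hp.2 z).mp hqz
      have hI2z : I2 = 0 := by
        rw [hI2def, setIntegral_congr_fun measurableSet_Ioo
          (g := fun _ => (0:ℝ)) (fun u hu => ?_), integral_zero]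
        have h1 : Q u ≤ q := hmono ⟨hu.1, hu.2.trans hp.2⟩ hp hu.2.le
        exact max_eq_right (by linarith)
      have hI1le : I1 ≤ (c - p) * (z - q) := by
        have hind : IntegrableOn (fun u => (Iic c).indicator (fun _ => z - q) u)
            (Ioo p 1) volume :=
          (integrableOn_const measure_Ioo_lt_top.ne).indicator measurableSet_Iic
        have hle : ∀ u ∈ Ioo p 1, max (z - Q u) 0 ≤ (Iic c).indicator (fun _ => z - q) u := by
          intro u hu
          by_cases huc : u ≤ c
          · rw [Set.indicator_of_mem (show u ∈ Iic c from huc)]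
            have h1 : q ≤ Q u := hmono hp ⟨hp.1.trans hu.1, hu.2⟩ hu.1.le
            exact max_le (by linarith) (by linarith)
          · rw [Set.indicator_of_notMem (show u ∉ Iic c from huc)]
            push_neg at huc
            have h2 : ¬ Q u ≤ z := fun h =>
              huc.not_ge ((qtl_le_iff μ (hp.1.trans hu.1) hu.2 z).mp h)
            push_neg at h2
            exact le_of_eq (max_eq_right (by linarith))
        have hmo := setIntegral_mono_on hIzmax hind measurableSet_Ioo hle
        have hset : Ioo p 1 ∩ Iic c = Ioc p c \ {1} := by
          ext u
          simp only [mem_inter_iff, mem_Ioo, mem_Iic, mem_diff, mem_Ioc, mem_singleton_iff]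
          constructor
          · rintro ⟨⟨h1, h2⟩, h3⟩; exact ⟨⟨h1, h3⟩, ne_of_lt h2⟩
          · rintro ⟨⟨h1, h3⟩, h4⟩; exact ⟨⟨h1, lt_of_le_of_ne (h3.trans hc1) h4⟩, h3⟩
        rw [setIntegral_indicator measurableSet_Iic, hset, setIntegral_const, measureReal_def,
          measure_diff_null (Real.volume_singleton), Real.volume_Ioc,
          ENNReal.toReal_ofReal (by linarith), smul_eq_mul] at hmo
        exact le_trans hmo (le_of_eq (by ring))
      linarith
    · -- z < q, so c < p
      have hcp : c < p := by
        by_contra h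
        push_neg at h
        exact hqz.not_ge ((qtl_le_iff μ hp.1 hp.2 z).mpr h)
      have hI1z : I1 = 0 := by
        rw [hI1def, setIntegral_congr_fun measurableSet_Ioo
          (g := fun _ => (0:ℝ)) (fun u hu => ?_), integral_zero]
        have h1 : q ≤ Q u := hmono hp ⟨hp.1.trans hu.1, hu.2⟩ hu.1.le
        exact max_eq_right (by linarith)
      have hI2le : I2 ≤ (p - c) * (q - z) := by
        have hind : IntegrableOn (fun u => (Ioi c).indicator (fun _ => q - z) u)
            (Ioo (0:ℝ) p) volume :=
          (integrableOn_const measure_Ioo_lt_top.ne).indicator measurableSet_Ioi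
        have hle : ∀ u ∈ Ioo (0:ℝ) p, max (Q u - z) 0 ≤ (Ioi c).indicator (fun _ => q - z) u := by
          intro u hu
          by_cases huc : c < u
          · rw [Set.indicator_of_mem (show u ∈ Ioi c from huc)]
            have h1 : Q u ≤ q := hmono ⟨hu.1, hu.2.trans hp.2⟩ hp hu.2.le
            exact max_le (by linarith) (by linarith)
          · rw [Set.indicator_of_notMem (show u ∉ Ioi c from huc)]
            push_neg at huc
            have h2 : Q u ≤ z := (qtl_le_iff μ hu.1 (hu.2.trans hp.2) z).mpr huc
            exact le_of_eq (max_eq_right (by linarith))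
        have hmo := setIntegral_mono_on hImax_0p hind measurableSet_Ioo hle
        have hset : Ioo (0:ℝ) p ∩ Ioi c = Ioo c p := by
          ext u
          simp only [mem_inter_iff, mem_Ioo, mem_Ioi]
          constructor
          · rintro ⟨⟨h1, h2⟩, h3⟩; exact ⟨h3, h2⟩
          · rintro ⟨h3, h2⟩; exact ⟨⟨lt_of_le_of_lt hc0 h3, h2⟩, h3⟩
        rw [setIntegral_indicator measurableSet_Ioi, hset, setIntegral_const, measureReal_def,
          Real.volume_Ioo, ENNReal.toReal_ofReal (by linarith), smul_eq_mul] at hmo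
        exact hmo
      have hring : (p - c) * (q - z) = (c - p) * (z - q) := by ring
      linarith
  constructor <;> linarith

end Aux

lemma delta_eq (μ ν : Measure ℝ) [IsProbabilityMeasure μ] [IsProbabilityMeasure ν]
    (hμ : Integrable (fun x => max x 0) μ) (hν : Integrable (fun x => max x 0) ν)
    (p z : ℝ) (hp : p ∈ Ioo (0 : ℝ) 1) :
    deltaFun p z μ ν
      = ((∫ u in Ioo p 1, qtl (cdf μ) u) - ∫ u in Ioo (0:ℝ) 1, max (qtl (cdf μ) u - z) 0)
        - ((∫ u in Ioo p 1, qtl (cdf ν) u)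
            - ∫ u in Ioo (0:ℝ) 1, max (qtl (cdf ν) u - z) 0) := by
  have h1 : ∫ u in p..1, (qtl (cdfOf μ) u - qtl (cdfOf ν) u)
      = (∫ u in Ioo p 1, qtl (cdf μ) u) - ∫ u in Ioo p 1, qtl (cdf ν) u := by
    rw [cdfOf_eq μ, cdfOf_eq ν, intervalIntegral.integral_of_le hp.2.le,
      integral_Ioc_eq_integral_Ioo,
      integral_sub (qtl_integrableOn μ z hμ hp) (qtl_integrableOn ν z hν hp)]
  have h2 : ∫ x in Ioi z, (cdfOf ν x - cdfOf μ x)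
      = (∫ u in Ioo (0:ℝ) 1, max (qtl (cdf μ) u - z) 0)
        - ∫ u in Ioo (0:ℝ) 1, max (qtl (cdf ν) u - z) 0 := by
    rw [cdfOf_eq μ, cdfOf_eq ν]
    calc ∫ x in Ioi z, (cdf ν x - cdf μ x)
        = ∫ x in Ioi z, ((1 - cdf μ x) - (1 - cdf ν x)) :=
          setIntegral_congr_fun measurableSet_Ioi fun x hx => by ring
      _ = (∫ x in Ioi z, (1 - cdf μ x)) - ∫ x in Ioi z, (1 - cdf ν x) :=
          integral_sub (tail_integrable μ z hμ) (tail_integrable ν z hν)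
      _ = _ := by rw [tail_eq_qmax μ z, tail_eq_qmax ν z]
  rw [deltaFun, h1, h2]; ring

/-- for `p ∈ (0,1)`, `z ∈ ℝ` and cdf's `F, G ∈ F₁⁺` (i.e. cdf's of
probability measures `μ, ν` with `E(X⁺) < ∞`), the difference functional satisfies
`(F(z) − p)(F⁻¹(p) − z) ≤ Δ_{p,z}(F,G) ≤ (G(z) − p)(z − G⁻¹(p))`. -/
theorem stmt0 (μ ν : Measure ℝ) [IsProbabilityMeasure μ] [IsProbabilityMeasure ν]
    (hμ : Integrable (fun x => max x 0) μ) (hν : Integrable (fun x => max x 0) ν)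
    (p z : ℝ) (hp : p ∈ Ioo (0 : ℝ) 1) :
    (cdfOf μ z - p) * (qtl (cdfOf μ) p - z) ≤ deltaFun p z μ ν ∧
      deltaFun p z μ ν ≤ (cdfOf ν z - p) * (z - qtl (cdfOf ν) p) := by
  obtain ⟨hμlo, hμhi⟩ := psi_bounds μ (p := p) z hμ hp
  obtain ⟨hνlo, hνhi⟩ := psi_bounds ν (p := p) z hν hp
  have hd := delta_eq μ ν hμ hν p z hp
  rw [cdfOf_eq μ, cdfOf_eq ν]
  constructor
  · have hr : (cdf μ z - p) * (qtl (cdf μ) p - z)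
        = -((cdf μ z - p) * (z - qtl (cdf μ) p)) := by ring
    linarith
  · linarith
end

section
/- Let p ∈ (0,1) and let F, G ∈ F_1^+ be cumulative distribution functions. Then Δ_{p,z}(F,G) evaluated at z = F^{-1}(p) is non-negative, i.e., ∫_p^1 (F^{-1}(u) − G^{-1}(u)) du − ∫_{F^{-1}(p)}^∞ (G(x) − F(x)) dx ≥ 0. -/
open MeasureTheory ProbabilityTheory Filter Set

open scoped Topology

namespace Stmt1Aux

variable (ρ : Measure ℝ) [IsProbabilityMeasure ρ]

lemma cdfOf_eq : cdfOf ρ = fun x => cdf ρ x :=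
  funext fun x => (cdf_eq_real ρ x).symm

lemma cdfOf_mono : Monotone (cdfOf ρ) := by
  rw [cdfOf_eq]; exact monotone_cdf ρ

lemma cdfOf_meas : Measurable (cdfOf ρ) := (cdfOf_mono ρ).measurable

/-- Galois property of the quantile function. -/
lemma qtl_le_iff {u : ℝ} (hu : u ∈ Ioo (0:ℝ) 1) (x : ℝ) :
    qtl (cdfOf ρ) u ≤ x ↔ u ≤ cdfOf ρ x := by
  set S : Set ℝ := {y | u ≤ cdfOf ρ y} with hS
  have hne : S.Nonempty := by
    obtain ⟨x0, hx0⟩ := ((tendsto_cdf_atTop ρ).eventually_const_le hu.2).exists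
    exact ⟨x0, by rwa [hS, mem_setOf_eq, cdfOf_eq]⟩
  have hbdd : BddBelow S := by
    obtain ⟨x0, hx0⟩ := (eventually_atBot.mp ((tendsto_cdf_atBot ρ).eventually_lt_const hu.1))
    refine ⟨x0, fun y hy => ?_⟩
    by_contra h
    push_neg at h
    have : cdfOf ρ y < u := by rw [cdfOf_eq]; exact hx0 y h.le
    exact absurd hy (by simpa [hS] using this.not_ge)
  have hqS : u ≤ cdfOf ρ (sInf S) := by
    rw [cdfOf_eq]
    have hrc : ContinuousWithinAt (cdf ρ) (Ioi (sInf S)) (sInf S) :=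
      ((cdf ρ).right_continuous (sInf S)).mono Ioi_subset_Ici_self
    refine ge_of_tendsto (hrc.tendsto) ?_
    filter_upwards [self_mem_nhdsWithin] with y hy
    obtain ⟨s, hsS, hs⟩ := (csInf_lt_iff hbdd hne).mp hy
    calc u ≤ cdfOf ρ s := hsS
    _ ≤ cdfOf ρ y := cdfOf_mono ρ hs.le
    _ = cdf ρ y := by rw [cdfOf_eq]
  constructor
  · intro h
    exact le_trans hqS (cdfOf_mono ρ h)
  · intro h
    exact csInf_le hbdd h

lemma le_cdf_qtl {u : ℝ} (hu : u ∈ Ioo (0:ℝ) 1) : u ≤ cdfOf ρ (qtl (cdfOf ρ) u) :=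
  (qtl_le_iff ρ hu _).mp le_rfl

lemma qtl_monoOn : MonotoneOn (qtl (cdfOf ρ)) (Ioo (0:ℝ) 1) := by
  intro u hu v hv huv
  exact (qtl_le_iff ρ hu _).mpr (le_trans huv (le_cdf_qtl ρ hv))

lemma qtl_aemeas : AEMeasurable (qtl (cdfOf ρ)) (volume.restrict (Ioo (0:ℝ) 1)) :=
  aemeasurable_restrict_of_monotoneOn measurableSet_Ioo (qtl_monoOn ρ)

lemma map_qtl : Measure.map (qtl (cdfOf ρ)) (volume.restrict (Ioo (0:ℝ) 1)) = ρ := by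
  have h1 : IsProbabilityMeasure (volume.restrict (Ioo (0:ℝ) 1)) := by
    constructor
    simp [Real.volume_Ioo]
  have h2 : IsProbabilityMeasure (Measure.map (qtl (cdfOf ρ)) (volume.restrict (Ioo (0:ℝ) 1))) :=
    Measure.isProbabilityMeasure_map (qtl_aemeas ρ)
  refine Measure.ext_of_Iic _ _ (fun a => ?_)
  rw [Measure.map_apply_of_aemeasurable (qtl_aemeas ρ) measurableSet_Iic,
    Measure.restrict_apply' measurableSet_Ioo]
  have hset : qtl (cdfOf ρ) ⁻¹' Iic a ∩ Ioo 0 1 = Iic (cdfOf ρ a) ∩ Ioo 0 1 := by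
    ext u
    simp only [mem_inter_iff, mem_preimage, mem_Iic, and_congr_left_iff]
    intro hu
    exact qtl_le_iff ρ hu a
  rw [hset]
  have h0 : 0 ≤ cdfOf ρ a := ENNReal.toReal_nonneg
  have h1' : cdfOf ρ a ≤ 1 := by
    rw [cdfOf_eq]; exact cdf_le_one ρ a
  have hsub1 : Ioo 0 (cdfOf ρ a) ⊆ Iic (cdfOf ρ a) ∩ Ioo 0 1 := by
    intro x hx
    exact ⟨hx.2.le, hx.1, lt_of_lt_of_le hx.2 h1'⟩
  have hsub2 : Iic (cdfOf ρ a) ∩ Ioo 0 1 ⊆ Ioc 0 (cdfOf ρ a) := by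
    intro x hx
    exact ⟨hx.2.1, hx.1⟩
  have hmeas : volume (Iic (cdfOf ρ a) ∩ Ioo 0 1) = ENNReal.ofReal (cdfOf ρ a) := by
    refine le_antisymm ?_ ?_
    · calc volume (Iic (cdfOf ρ a) ∩ Ioo 0 1) ≤ volume (Ioc 0 (cdfOf ρ a)) := measure_mono hsub2
      _ = ENNReal.ofReal (cdfOf ρ a) := by rw [Real.volume_Ioc]; simp
    · calc ENNReal.ofReal (cdfOf ρ a) = volume (Ioo 0 (cdfOf ρ a)) := by
            rw [Real.volume_Ioo]; simp
      _ ≤ volume (Iic (cdfOf ρ a) ∩ Ioo 0 1) := measure_mono hsub1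
  rw [hmeas, cdfOf_eq, ofReal_cdf]

/-- Integrability of the positive part `(x - c)⁺`. -/
lemma integrable_pos_part (hρ : Integrable (fun x => max x 0) ρ) (c : ℝ) :
    Integrable (fun x => max (x - c) 0) ρ := by
  refine Integrable.mono' (hρ.add (integrable_const |c|))
    (Continuous.aestronglyMeasurable (by continuity)) ?_
  filter_upwards with x
  rw [Real.norm_eq_abs, abs_of_nonneg (le_max_right _ _)]
  simp only [Pi.add_apply]
  have h0 : (0:ℝ) ≤ max x 0 := le_max_right _ _
  have hx : x ≤ max x 0 := le_max_left _ _
  have hc : -c ≤ |c| := neg_le_abs c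
  rcases le_or_gt (x - c) 0 with h | h
  · rw [max_eq_right h]
    have := abs_nonneg c
    linarith
  · rw [max_eq_left h.le]
    linarith

/-- Pushforward identity for `(qtl F u - c)⁺`. -/
lemma pos_part_qtl (hρ : Integrable (fun x => max x 0) ρ) (c : ℝ) :
    IntegrableOn (fun u => max (qtl (cdfOf ρ) u - c) 0) (Ioo (0:ℝ) 1) ∧
    ∫ u in Ioo (0:ℝ) 1, max (qtl (cdfOf ρ) u - c) 0 = ∫ x, max (x - c) 0 ∂ρ := by
  have hg : Continuous (fun x : ℝ => max (x - c) 0) := by continuity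
  have hint : Integrable (fun x => max (x - c) 0) ρ := integrable_pos_part ρ hρ c
  constructor
  · have := (integrable_map_measure
      (hg.aestronglyMeasurable) (qtl_aemeas ρ)).mp (by rwa [map_qtl])
    exact this
  · have := integral_map (qtl_aemeas ρ) (f := fun x : ℝ => max (x - c) 0)
      hg.aestronglyMeasurable
    rw [map_qtl] at this
    exact this.symm

/-- Layer cake: `∫_{Ioi q} (1 - F) = ∫ (x - q)⁺ dρ`, with integrability. -/
lemma layercake (hρ : Integrable (fun x => max x 0) ρ) (q : ℝ) :
    IntegrableOn (fun x => 1 - cdfOf ρ x) (Ioi q) ∧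
    ∫ x in Ioi q, (1 - cdfOf ρ x) = ∫ x, max (x - q) 0 ∂ρ := by
  have hint : Integrable (fun x => max (x - q) 0) ρ := integrable_pos_part ρ hρ q
  have hnn : 0 ≤ᵐ[ρ] fun x => max (x - q) 0 :=
    Eventually.of_forall fun x => le_max_right _ _
  have key1 : ∫⁻ x, ENNReal.ofReal (max (x - q) 0) ∂ρ
      = ∫⁻ t in Ioi (0:ℝ), ρ {a | t < max (a - q) 0} :=
    lintegral_eq_lintegral_meas_lt ρ hnn hint.aemeasurable
  have key2 : ∫⁻ t in Ioi (0:ℝ), ρ {a | t < max (a - q) 0}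
      = ∫⁻ t in Ioi (0:ℝ), ρ (Ioi (q + t)) := by
    refine setLIntegral_congr_fun measurableSet_Ioi (fun t ht => ?_)
    congr 1
    ext a
    simp only [mem_setOf_eq, mem_Ioi, lt_max_iff]
    rw [mem_Ioi] at ht
    constructor
    · rintro (h | h)
      · linarith
      · exact absurd h (lt_asymm ht)
    · intro h; left; linarith
  have hmeasIoi : Measurable fun x : ℝ => ρ (Ioi x) := by
    have hanti : Antitone fun x : ℝ => ρ (Ioi x) :=
      fun a b hab => measure_mono (Ioi_subset_Ioi hab)
    exact hanti.measurable
  have key3 : ∫⁻ x in Ioi q, ρ (Ioi x) = ∫⁻ t in Ioi (0:ℝ), ρ (Ioi (q + t)) := by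
    have hmp : MeasurePreserving (fun t : ℝ => q + t) volume volume :=
      measurePreserving_add_left volume q
    have hpre : (fun t : ℝ => q + t) ⁻¹' Ioi q = Ioi (0:ℝ) := by
      ext t
      simp [mem_preimage, mem_Ioi]
    conv_lhs => rw [← hmp.map_eq]
    rw [setLIntegral_map measurableSet_Ioi hmeasIoi (measurable_const_add q), hpre]
  have key4 : ∀ x : ℝ, ENNReal.ofReal (1 - cdfOf ρ x) = ρ (Ioi x) := by
    intro x
    have hc : ρ (Ioi x) = 1 - ρ (Iic x) := by
      rw [← compl_Iic, measure_compl measurableSet_Iic (measure_ne_top ρ _), measure_univ]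
    rw [hc, cdfOf]
    rw [ENNReal.ofReal_sub _ ENNReal.toReal_nonneg, ENNReal.ofReal_one,
      ENNReal.ofReal_toReal (measure_ne_top ρ _)]
  have keyL : ∫⁻ x in Ioi q, ENNReal.ofReal (1 - cdfOf ρ x)
      = ∫⁻ x, ENNReal.ofReal (max (x - q) 0) ∂ρ := by
    rw [key1, key2, ← key3]
    exact setLIntegral_congr_fun measurableSet_Ioi
      (fun x _ => key4 x)
  have hFle : ∀ x : ℝ, cdfOf ρ x ≤ 1 := fun x => by
    rw [cdfOf_eq]; exact cdf_le_one ρ x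
  have hnn2 : ∀ x : ℝ, 0 ≤ 1 - cdfOf ρ x := fun x => by linarith [hFle x]
  have hFm : Measurable fun x : ℝ => 1 - cdfOf ρ x := measurable_const.sub (cdfOf_meas ρ)
  have hfin : ∫⁻ x in Ioi q, ENNReal.ofReal (1 - cdfOf ρ x) < ⊤ := by
    rw [keyL]
    exact hint.lintegral_lt_top
  have hintOn : IntegrableOn (fun x => 1 - cdfOf ρ x) (Ioi q) := by
    refine ⟨hFm.aestronglyMeasurable.restrict, ?_⟩
    rw [hasFiniteIntegral_iff_ofReal (Eventually.of_forall fun x => hnn2 x)]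
    exact hfin
  refine ⟨hintOn, ?_⟩
  rw [integral_eq_lintegral_of_nonneg_ae (Eventually.of_forall fun x => hnn2 x)
      hFm.aestronglyMeasurable.restrict,
    integral_eq_lintegral_of_nonneg_ae hnn hint.aestronglyMeasurable, keyL]

end Stmt1Aux

/-- for `p ∈ (0,1)` and cdf's `F, G ∈ F₁⁺`, the difference functional
`Δ_{p,z}(F,G)` evaluated at `z = F⁻¹(p)` is non-negative:
`∫_p^1 (F⁻¹(u) − G⁻¹(u)) du − ∫_{F⁻¹(p)}^∞ (G(x) − F(x)) dx ≥ 0`. -/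
theorem stmt1 (μ ν : Measure ℝ) [IsProbabilityMeasure μ] [IsProbabilityMeasure ν]
    (hμ : Integrable (fun x => max x 0) μ) (hν : Integrable (fun x => max x 0) ν)
    (p : ℝ) (hp : p ∈ Ioo (0 : ℝ) 1) :
    0 ≤ (∫ u in p..1, (qtl (cdfOf μ) u - qtl (cdfOf ν) u)) -
        ∫ x in Ioi (qtl (cdfOf μ) p), (cdfOf ν x - cdfOf μ x) := by
  obtain ⟨hp0, hp1⟩ := hp
  have hpmem : p ∈ Ioo (0:ℝ) 1 := ⟨hp0, hp1⟩
  set q := qtl (cdfOf μ) p with hqdef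
  obtain ⟨hFint, hFval⟩ := Stmt1Aux.pos_part_qtl μ hμ q
  obtain ⟨hGint, hGval⟩ := Stmt1Aux.pos_part_qtl ν hν q
  obtain ⟨hGint2, _⟩ := Stmt1Aux.pos_part_qtl ν hν (qtl (cdfOf ν) p)
  obtain ⟨hLFint, hLFval⟩ := Stmt1Aux.layercake μ hμ q
  obtain ⟨hLGint, hLGval⟩ := Stmt1Aux.layercake ν hν q
  set Iμ := ∫ x, max (x - q) 0 ∂μ with hIμ
  set Iν := ∫ x, max (x - q) 0 ∂ν with hIν
  -- right-hand integral
  have hRight : ∫ x in Ioi q, (cdfOf ν x - cdfOf μ x) = Iμ - Iν := by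
    have heq : (fun x => cdfOf ν x - cdfOf μ x)
        = fun x => (1 - cdfOf μ x) - (1 - cdfOf ν x) := by
      funext x; ring
    rw [heq, integral_sub hLFint hLGint, hLFval, hLGval]
  have hsub : Ioo p 1 ⊆ Ioo (0:ℝ) 1 := Ioo_subset_Ioo hp0.le le_rfl
  have hqF : ∀ u ∈ Ioo p 1, q ≤ qtl (cdfOf μ) u := fun u hu =>
    Stmt1Aux.qtl_monoOn μ hpmem (hsub hu) hu.1.le
  have hqG : ∀ u ∈ Ioo p 1, qtl (cdfOf ν) p ≤ qtl (cdfOf ν) u := fun u hu =>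
    Stmt1Aux.qtl_monoOn ν hpmem (hsub hu) hu.1.le
  -- integrability on Ioo p 1
  have hFon : IntegrableOn (fun u => qtl (cdfOf μ) u - q) (Ioo p 1) := by
    refine (hFint.mono_set hsub).congr_fun (fun u hu => ?_) measurableSet_Ioo
    exact max_eq_left (sub_nonneg.mpr (hqF u hu))
  have hGon : IntegrableOn (fun u => qtl (cdfOf ν) u - q) (Ioo p 1) := by
    have h1 : IntegrableOn
        (fun u => max (qtl (cdfOf ν) u - qtl (cdfOf ν) p) 0 + (qtl (cdfOf ν) p - q))
        (Ioo p 1) := by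
      refine (hGint2.mono_set hsub).add ((integrableOn_const_iff).mpr (Or.inr ?_))
      rw [Real.volume_Ioo]
      exact ENNReal.ofReal_lt_top
    refine h1.congr_fun (fun u hu => ?_) measurableSet_Ioo
    dsimp only
    rw [max_eq_left (sub_nonneg.mpr (hqG u hu))]
    ring
  have hGonMax : IntegrableOn (fun u => max (qtl (cdfOf ν) u - q) 0) (Ioo p 1) :=
    hGint.mono_set hsub
  -- value of the F-side integral
  have hvalF : ∫ u in Ioo p 1, (qtl (cdfOf μ) u - q) = Iμ := by
    rw [setIntegral_congr_fun measurableSet_Ioo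
      (fun u hu => (max_eq_left (sub_nonneg.mpr (hqF u hu))).symm :
        EqOn (fun u => qtl (cdfOf μ) u - q) (fun u => max (qtl (cdfOf μ) u - q) 0) (Ioo p 1))]
    have hdisj : Disjoint (Ioc 0 p) (Ioo p 1) :=
      disjoint_left.mpr fun x hx1 hx2 => absurd hx2.1 (not_lt.mpr hx1.2)
    have hsub2 : Ioc 0 p ⊆ Ioo (0:ℝ) 1 := fun u hu => ⟨hu.1, lt_of_le_of_lt hu.2 hp1⟩
    have hsplit : ∫ u in Ioo (0:ℝ) 1, max (qtl (cdfOf μ) u - q) 0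
        = (∫ u in Ioc (0:ℝ) p, max (qtl (cdfOf μ) u - q) 0)
          + ∫ u in Ioo p 1, max (qtl (cdfOf μ) u - q) 0 := by
      rw [← setIntegral_union hdisj measurableSet_Ioo (hFint.mono_set hsub2)
        (hFint.mono_set hsub), Ioc_union_Ioo_eq_Ioo hp0.le hp1]
    have hzero : ∫ u in Ioc (0:ℝ) p, max (qtl (cdfOf μ) u - q) 0 = 0 := by
      rw [setIntegral_congr_fun measurableSet_Ioc
        (fun u hu => ?_ : EqOn (fun u => max (qtl (cdfOf μ) u - q) 0) (fun _ => (0:ℝ))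
          (Ioc 0 p))]
      · exact integral_zero _ _
      · rcases eq_or_lt_of_le hu.2 with h | h
        · simp [h, hqdef]
        · exact max_eq_right (sub_nonpos.mpr
            (Stmt1Aux.qtl_monoOn μ ⟨hu.1, lt_trans h hp1⟩ hpmem hu.2))
    have := hsplit
    rw [hzero, zero_add] at this
    rw [← this, hFval]
  -- bound on the G-side integral
  have hboundG : ∫ u in Ioo p 1, (qtl (cdfOf ν) u - q) ≤ Iν := by
    calc ∫ u in Ioo p 1, (qtl (cdfOf ν) u - q)
        ≤ ∫ u in Ioo p 1, max (qtl (cdfOf ν) u - q) 0 :=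
          setIntegral_mono_on hGon hGonMax measurableSet_Ioo fun x _ => le_max_left _ _
      _ ≤ ∫ u in Ioo (0:ℝ) 1, max (qtl (cdfOf ν) u - q) 0 :=
          setIntegral_mono_set hGint
            (Eventually.of_forall fun u => le_max_right _ _)
            (HasSubset.Subset.eventuallyLE hsub)
      _ = Iν := hGval
  -- left-hand integral
  have hLeft : ∫ u in p..1, (qtl (cdfOf μ) u - qtl (cdfOf ν) u)
      = Iμ - ∫ u in Ioo p 1, (qtl (cdfOf ν) u - q) := by
    rw [intervalIntegral.integral_of_le hp1.le, integral_Ioc_eq_integral_Ioo]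
    have heq : EqOn (fun u => qtl (cdfOf μ) u - qtl (cdfOf ν) u)
        (fun u => (qtl (cdfOf μ) u - q) - (qtl (cdfOf ν) u - q)) (Ioo p 1) :=
      fun u _ => by ring
    rw [setIntegral_congr_fun measurableSet_Ioo heq, integral_sub hFon hGon, hvalF]
  rw [hLeft, hRight]
  linarith
end

section
/- Let p ∈ (0,1) and let F, G be arbitrary cumulative distribution functions (no moment assumptions). Define the extended gap functional Γ*_p(F,G) = ∫_{F^{-1}(p)}^{G^{-1}(p)} (p − G(x)) dx (an oriented integral, equal to ∫_{G^{-1}(p)}^{F^{-1}(p)} (G(x) − p) dx when F^{-1}(p) ≥ G^{-1}(p)). If F is continuous at the point x_p := F^{-1}(p), then 0 ≤ Γ*_p(F,G) ≤ (F^{-1}(p) − G^{-1}(p)) (G(x_p) − F(x_p)). -/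
/-!
Write `a = F⁻¹(p)` and `b = G⁻¹(p)`. By definition of the quantile, `G < p` left of `b` and
`G ≥ p` from `b` on, so the integrand `p - G` of the oriented integral from `a` to `b` has the
sign of `b - a`, whence `Γ*_p(F,G) ≥ 0`. Since `p - G` is antitone, the oriented integral is at
most `(b - a) (p - G(a))`, and continuity of `F` at `a` gives `F(a) = p`.
-/

open MeasureTheory ProbabilityTheory Filter Set

/-- The extended "gap" functional `Γ*_p(F,G) = ∫_{F⁻¹(p)}^{G⁻¹(p)} (p − G(x)) dx`,
an oriented (interval) integral. -/
noncomputable def gapStar (p : ℝ) (F G : ℝ → ℝ) : ℝ :=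
  ∫ x in (qtl F p)..(qtl G p), (p - G x)

theorem Antitone.intervalIntegral_le_mul {f : ℝ → ℝ} (hf : Antitone f) (a b : ℝ) :
    ∫ x in a..b, f x ≤ (b - a) * f a := by
  rcases le_total a b with hab | hba
  · calc ∫ x in a..b, f x ≤ ∫ _ in a..b, f a :=
          intervalIntegral.integral_mono_on hab hf.intervalIntegrable intervalIntegrable_const
            fun x hx => hf hx.1
      _ = (b - a) * f a := by simp
  · have : (a - b) * f a ≤ ∫ x in b..a, f x :=
      calc (a - b) * f a = ∫ _ in b..a, f a := by simp
        _ ≤ ∫ x in b..a, f x :=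
          intervalIntegral.integral_mono_on hba intervalIntegrable_const hf.intervalIntegrable
            fun x hx => hf hx.2
    rw [intervalIntegral.integral_symm]
    linarith

theorem intervalIntegral_nonneg_of_sign_change {f : ℝ → ℝ} {a b : ℝ}
    (hf : IntervalIntegrable f volume a b) (hpos : ∀ x < b, 0 ≤ f x)
    (hneg : ∀ x, b ≤ x → f x ≤ 0) :
    0 ≤ ∫ x in a..b, f x := by
  rcases le_total a b with hab | hba
  · simpa using intervalIntegral.integral_mono_on_of_le_Ioo hab intervalIntegrable_const hf
      fun x hx => hpos x hx.2
  · rw [intervalIntegral.integral_symm, neg_nonneg]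
    simpa using intervalIntegral.integral_mono_on hba hf.symm intervalIntegrable_const
      fun x hx => hneg x hx.1

section Quantile

variable {F : ℝ → ℝ} {p : ℝ}

theorem apply_lt_of_lt_qtl (hbdd : BddBelow {x | p ≤ F x}) {x : ℝ} (hx : x < qtl F p) :
    F x < p :=
  lt_of_not_ge fun h => hx.not_ge (csInf_le hbdd h)

theorem le_apply_qtl (hF : Monotone F)
    (hright : ContinuousWithinAt F (Ioi (qtl F p)) (qtl F p))
    (hne : {x | p ≤ F x}.Nonempty) (hbdd : BddBelow {x | p ≤ F x}) :
    p ≤ F (qtl F p) := by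
  have hle : ∀ x ∈ Ioi (qtl F p), p ≤ F x := fun x hx => by
    obtain ⟨y, hy, hyx⟩ := (csInf_lt_iff hbdd hne).mp hx
    exact hy.trans (hF hyx.le)
  exact ge_of_tendsto hright (eventually_nhdsWithin_of_forall hle)

theorem apply_qtl_eq_of_continuousAt (hF : Monotone F) (hcont : ContinuousAt F (qtl F p))
    (hne : {x | p ≤ F x}.Nonempty) (hbdd : BddBelow {x | p ≤ F x}) :
    F (qtl F p) = p := by
  refine le_antisymm ?_ (le_apply_qtl hF hcont.continuousWithinAt hne hbdd)
  exact le_of_tendsto hcont.continuousWithinAt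
    (eventually_nhdsWithin_of_forall fun x (hx : x ∈ Iio _) => (apply_lt_of_lt_qtl hbdd hx).le)

end Quantile

section CdfOf

variable (μ : Measure ℝ) [IsProbabilityMeasure μ] {p : ℝ}

theorem cdfOf_eq_cdf : cdfOf μ = cdf μ := by
  funext x
  rw [cdfOf, cdf_eq_real, measureReal_def]

theorem monotone_cdfOf : Monotone (cdfOf μ) := by
  rw [cdfOf_eq_cdf]
  exact monotone_cdf μ

theorem continuousWithinAt_Ioi_cdfOf (x : ℝ) : ContinuousWithinAt (cdfOf μ) (Ioi x) x := by
  rw [cdfOf_eq_cdf]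
  exact ((cdf μ).right_continuous x).mono Ioi_subset_Ici_self

theorem nonempty_setOf_le_cdfOf (hp : p < 1) : {x | p ≤ cdfOf μ x}.Nonempty := by
  rw [cdfOf_eq_cdf]
  obtain ⟨x, hx⟩ := ((tendsto_cdf_atTop μ).eventually (eventually_gt_nhds hp)).exists
  exact ⟨x, hx.le⟩

theorem bddBelow_setOf_le_cdfOf (hp : 0 < p) : BddBelow {x | p ≤ cdfOf μ x} := by
  rw [cdfOf_eq_cdf]
  obtain ⟨y, hy⟩ := eventually_atBot.mp
    ((tendsto_cdf_atBot μ).eventually (eventually_lt_nhds hp))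
  exact ⟨y, fun x hx => le_of_not_gt fun hxy => (hy x hxy.le).not_ge hx⟩

end CdfOf

/-- for `p ∈ (0,1)` and arbitrary cdf's `F, G` (no moment assumptions),
if `F` is continuous at `x_p := F⁻¹(p)` then
`0 ≤ Γ*_p(F,G) ≤ (F⁻¹(p) − G⁻¹(p)) (G(x_p) − F(x_p))`. -/
theorem stmt5 (μ ν : Measure ℝ) [IsProbabilityMeasure μ] [IsProbabilityMeasure ν]
    (p : ℝ) (hp : p ∈ Ioo (0 : ℝ) 1)
    (hcont : ContinuousAt (cdfOf μ) (qtl (cdfOf μ) p)) :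
    0 ≤ gapStar p (cdfOf μ) (cdfOf ν) ∧
      gapStar p (cdfOf μ) (cdfOf ν) ≤
        (qtl (cdfOf μ) p - qtl (cdfOf ν) p) *
          (cdfOf ν (qtl (cdfOf μ) p) - cdfOf μ (qtl (cdfOf μ) p)) := by
  obtain ⟨hp0, hp1⟩ := hp
  have hF : cdfOf μ (qtl (cdfOf μ) p) = p := apply_qtl_eq_of_continuousAt (monotone_cdfOf μ)
    hcont (nonempty_setOf_le_cdfOf μ hp1) (bddBelow_setOf_le_cdfOf μ hp0)
  have hG : p ≤ cdfOf ν (qtl (cdfOf ν) p) := le_apply_qtl (monotone_cdfOf ν)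
    (continuousWithinAt_Ioi_cdfOf ν _) (nonempty_setOf_le_cdfOf ν hp1)
    (bddBelow_setOf_le_cdfOf ν hp0)
  have hanti : Antitone fun x => p - cdfOf ν x := fun _ _ hxy =>
    sub_le_sub_left (monotone_cdfOf ν hxy) p
  constructor
  · refine intervalIntegral_nonneg_of_sign_change hanti.intervalIntegrable
      (fun x hx => ?_) (fun x hx => ?_)
    · exact sub_nonneg.mpr (apply_lt_of_lt_qtl (bddBelow_setOf_le_cdfOf ν hp0) hx).le
    · exact sub_nonpos.mpr (hG.trans (monotone_cdfOf ν hx))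
  · rw [hF]
    exact (hanti.intervalIntegral_le_mul _ _).trans_eq (by ring)
end
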